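/- Let a ≥ 1 be a real number and let f: {0,1}^n → ℝ be a nonnegative a-self-bounding function. Then the total ℓ_1-influence satisfies Inf^1(f) = Σ_{i=1}^n E[|∂_i f|] ≤ a · ‖f‖_1. In particular, if f has range contained in [0,1], then Inf^1(f) ≤ a. -/

import Mathlib

/-!
On each edge `{x_{i←0}, x_{i←1}}` of the cube the two values of the gap
`f x - min (f x_{i←0}) (f x_{i←1})` are `0` and `max - min = |f x_{i←1} - f x_{i←0}| = 2 |∂ᵢ f x|`,
so `E |∂ᵢ f|` is the expected gap in direction `i`. Summing over `i` and bounding the sum of the gaps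
pointwise by `a f x` gives `Inf¹ f ≤ a E f`.
-/

noncomputable section

/-- A function `f : {0,1}^n → ℝ` is `a`-self-bounding. -/
def SelfBounding (n : ℕ) (a : ℝ) (f : (Fin n → Bool) → ℝ) : Prop :=
  ∀ x : Fin n → Bool,
    (∀ i : Fin n,
      f x - min (f (Function.update x i false)) (f (Function.update x i true)) ≤ 1) ∧
    ∑ i : Fin n,
      (f x - min (f (Function.update x i false)) (f (Function.update x i true))) ≤ a * f x

/-- Expectation with respect to the uniform distribution on `{0,1}^n`. -/
def expect (n : ℕ) (g : (Fin n → Bool) → ℝ) : ℝ :=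
  (∑ x : Fin n → Bool, g x) / 2 ^ n

/-- Discrete derivative `∂ᵢ f(x) = (f(x_{i←1}) − f(x_{i←0}))/2`. -/
def dderiv (n : ℕ) (f : (Fin n → Bool) → ℝ) (i : Fin n) (x : Fin n → Bool) : ℝ :=
  (f (Function.update x i true) - f (Function.update x i false)) / 2

open Function

section Cube

variable {ι : Type*} [DecidableEq ι]

theorem involutive_update_not (i : ι) :
    Involutive fun x : ι → Bool => update x i (!x i) := by
  intro x
  simp

variable [Fintype ι]

theorem two_nsmul_sum_eq_sum_update {M : Type*} [AddCommMonoid M] (h : (ι → Bool) → M) (i : ι) :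
    2 • ∑ x, h x = ∑ x, (h (update x i false) + h (update x i true)) := by
  have hflip : ∑ x, h (update x i (!x i)) = ∑ x, h x :=
    Equiv.sum_comp (involutive_update_not i).toPerm h
  rw [two_nsmul]
  nth_rewrite 2 [← hflip]
  rw [← Finset.sum_add_distrib]
  refine Finset.sum_congr rfl fun x _ => ?_
  cases hx : x i
  · have hx' : update x i false = x := hx ▸ update_eq_self i x
    simp [hx']
  · have hx' : update x i true = x := hx ▸ update_eq_self i x
    simp [hx', add_comm]

def coordGap (f : (ι → Bool) → ℝ) (i : ι) (x : ι → Bool) : ℝ :=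
  f x - min (f (update x i false)) (f (update x i true))

theorem sum_coordGap_eq_sum_abs (f : (ι → Bool) → ℝ) (i : ι) :
    ∑ x, coordGap f i x = ∑ x, |f (update x i true) - f (update x i false)| / 2 := by
  have hedge : ∀ x, coordGap f i (update x i false) + coordGap f i (update x i true) =
      |f (update x i true) - f (update x i false)| := by
    intro x
    simp only [coordGap, update_idem]
    rw [← max_sub_min_eq_abs]
    linarith [min_add_max (f (update x i false)) (f (update x i true))]
  have htwice := two_nsmul_sum_eq_sum_update (coordGap f i) i
  simp only [hedge, nsmul_eq_mul, Nat.cast_ofNat] at htwice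
  rw [← Finset.sum_div, ← htwice]
  ring

end Cube

theorem sum_abs_dderiv_eq_sum_coordGap {n : ℕ} (f : (Fin n → Bool) → ℝ) (i : Fin n) :
    ∑ x, |dderiv n f i x| = ∑ x, coordGap f i x := by
  simp only [sum_coordGap_eq_sum_abs, dderiv, abs_div, abs_two]

section Expect

variable {n : ℕ}

theorem expect_mono {g h : (Fin n → Bool) → ℝ} (hgh : ∀ x, g x ≤ h x) :
    expect n g ≤ expect n h :=
  div_le_div_of_nonneg_right (Finset.sum_le_sum fun x _ => hgh x) (by positivity)

theorem expect_const (c : ℝ) : expect n (fun _ => c) = c := by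
  simp [expect]

theorem expect_const_mul (c : ℝ) (g : (Fin n → Bool) → ℝ) :
    expect n (fun x => c * g x) = c * expect n g := by
  simp only [expect, ← Finset.mul_sum, mul_div_assoc]

theorem sum_expect {ι : Type*} (s : Finset ι) (g : ι → (Fin n → Bool) → ℝ) :
    ∑ i ∈ s, expect n (g i) = expect n (fun x => ∑ i ∈ s, g i x) := by
  simp only [expect, ← Finset.sum_div, Finset.sum_comm (s := s)]

end Expect

theorem SelfBounding.sum_expect_abs_dderiv_le {n : ℕ} {a : ℝ} {f : (Fin n → Bool) → ℝ}
    (hf : SelfBounding n a f) :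
    ∑ i : Fin n, expect n (fun x => |dderiv n f i x|) ≤ a * expect n f := calc
  _ = ∑ i : Fin n, expect n (coordGap f i) := by
    simp only [expect, sum_abs_dderiv_eq_sum_coordGap]
  _ = expect n (fun x => ∑ i : Fin n, coordGap f i x) := sum_expect _ _
  _ ≤ expect n (fun x => a * f x) := expect_mono fun x => (hf x).2
  _ = a * expect n f := expect_const_mul a f

theorem selfbounding_total_l1_influence (n : ℕ) (a : ℝ) (ha : 1 ≤ a)
    (f : (Fin n → Bool) → ℝ) (hf0 : ∀ x, 0 ≤ f x) (hf : SelfBounding n a f) :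
    (∑ i : Fin n, expect n (fun x => |dderiv n f i x|)) ≤ a * expect n (fun x => |f x|) ∧
      ((∀ x, f x ≤ 1) → (∑ i : Fin n, expect n (fun x => |dderiv n f i x|)) ≤ a) := by
  have habs : (fun x => |f x|) = f := funext fun x => abs_of_nonneg (hf0 x)
  rw [habs]
  refine ⟨hf.sum_expect_abs_dderiv_le, fun hf1 => ?_⟩
  have hexpect : expect n f ≤ 1 := (expect_mono hf1).trans_eq (expect_const 1)
  calc _ ≤ a * expect n f := hf.sum_expect_abs_dderiv_le
    _ ≤ a * 1 := mul_le_mul_of_nonneg_left hexpect (by linarith)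
    _ = a := mul_one a
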